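/- arXiv:2401.08290 — 3 statements merged into one kernel-verified Lean document; each statement's English description precedes it below -/
import Mathlib

section
/- Double robustness in the outcome regression: if the propensity λ_z(w) = P(Z=z | W=w) is correctly specified but the outcome regression ḡ_z is arbitrary (misspecified), then E[ ḡ_z(W) + 1{Z=z}·(δ(H) − ḡ_z(W))/λ_z(W) ] = E[g_z(W)], where g_z(w) = E[δ(H) | Z=z, W=w]. -/
open Finset
open scoped BigOperators Classical

noncomputable section

/-- Expectation with respect to a probability mass function on a finite sample space. -/
def pExp {Ω : Type*} [Fintype Ω] (p : Ω → ℝ) (f : Ω → ℝ) : ℝ := ∑ ω, p ω * f ω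

/-- Probability of an event. -/
def pPr {Ω : Type*} [Fintype Ω] (p : Ω → ℝ) (A : Set Ω) : ℝ :=
  ∑ ω, if ω ∈ A then p ω else 0

/-- Elementary conditional expectation given an event of positive probability. -/
def pCE {Ω : Type*} [Fintype Ω] (p : Ω → ℝ) (f : Ω → ℝ) (A : Set Ω) : ℝ :=
  (∑ ω, if ω ∈ A then p ω * f ω else 0) / pPr p A
/-- Double robustness in the outcome regression: correct propensity, arbitrary outcome model. -/
theorem dr_score_misspecified_outcome
    {Ω 𝕎 : Type*} [Fintype Ω] [Fintype 𝕎]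
    (p : Ω → ℝ) (hp : ∀ ω, 0 ≤ p ω) (hpsum : ∑ ω, p ω = 1)
    (Z : Ω → ℕ) (hZ : ∀ ω, Z ω = 0 ∨ Z ω = 1) (W : Ω → 𝕎)
    (δ : Ω → ℝ) (z : ℕ)
    (hpos : ∀ w, 0 < pPr p {ω | Z ω = z ∧ W ω = w})
    (lam : 𝕎 → ℝ)
    (hlam : ∀ w, lam w = pPr p {ω | Z ω = z ∧ W ω = w} / pPr p {ω | W ω = w})
    (hlam01 : ∀ w, 0 < lam w ∧ lam w < 1)
    (gbar : 𝕎 → ℝ)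
    (g : 𝕎 → ℝ)
    (hg : ∀ w, g w = pCE p δ {ω | Z ω = z ∧ W ω = w}) :
    pExp p (fun ω =>
        gbar (W ω) + (if Z ω = z then (1:ℝ) else 0) * (δ ω - gbar (W ω)) / lam (W ω))
    = pExp p (fun ω => g (W ω)) := by
  classical
  unfold pExp
  rw [← Finset.sum_fiberwise_of_maps_to (t := Finset.univ) (g := W)
      (fun ω _ => Finset.mem_univ (W ω)) (fun ω => p ω *
      (gbar (W ω) + (if Z ω = z then (1:ℝ) else 0) * (δ ω - gbar (W ω)) / lam (W ω))),
    ← Finset.sum_fiberwise_of_maps_to (t := Finset.univ) (g := W)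
      (fun ω _ => Finset.mem_univ (W ω)) (fun ω => p ω * g (W ω))]
  refine Finset.sum_congr rfl fun w _ => ?_
  set s := Finset.univ.filter (fun ω => W ω = w) with hs
  have hmem : ∀ ω ∈ s, W ω = w := fun ω hω => (Finset.mem_filter.mp hω).2
  set S1 := ∑ ω ∈ s, p ω with hS1
  set S2 := ∑ ω ∈ s, (if Z ω = z then p ω else 0) with hS2
  set T := ∑ ω ∈ s, (if Z ω = z then p ω * δ ω else 0) with hT
  have hPrW : pPr p {ω | W ω = w} = S1 := by
    rw [pPr, hS1, hs, Finset.sum_filter]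
    simp [Set.mem_setOf_eq]
  have hPrZW : pPr p {ω | Z ω = z ∧ W ω = w} = S2 := by
    rw [pPr, hS2, hs, Finset.sum_filter]
    refine Finset.sum_congr rfl fun ω _ => ?_
    by_cases h1 : W ω = w <;> by_cases h2 : Z ω = z <;>
      simp [Set.mem_setOf_eq, h1, h2]
  have hS2pos : 0 < S2 := hPrZW ▸ hpos w
  have hS1pos : 0 < S1 := by
    have : S2 ≤ S1 := by
      rw [hS1, hS2]
      refine Finset.sum_le_sum fun ω _ => ?_
      by_cases h : Z ω = z <;> simp [h, hp ω]
    linarith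
  have hlamw : lam w = S2 / S1 := by rw [hlam w, hPrW, hPrZW]
  have hgw : g w = T / S2 := by
    rw [hg w, pCE, hPrZW]
    congr 1
    rw [hT, hs, Finset.sum_filter]
    refine Finset.sum_congr rfl fun ω _ => ?_
    by_cases h1 : W ω = w <;> by_cases h2 : Z ω = z <;>
      simp [Set.mem_setOf_eq, h1, h2]
  have hexp : (∑ ω ∈ s, p ω *
      (gbar (W ω) + (if Z ω = z then (1:ℝ) else 0) * (δ ω - gbar (W ω)) / lam (W ω)))
      = gbar w * S1 + (T - gbar w * S2) / lam w := by
    have step : (∑ ω ∈ s, p ω *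
        (gbar (W ω) + (if Z ω = z then (1:ℝ) else 0) * (δ ω - gbar (W ω)) / lam (W ω)))
        = ∑ ω ∈ s, (gbar w * p ω +
          ((if Z ω = z then p ω * δ ω else 0) - gbar w * (if Z ω = z then p ω else 0)) / lam w) := by
      refine Finset.sum_congr rfl fun ω hω => ?_
      rw [hmem ω hω]
      by_cases h : Z ω = z <;> simp [h] <;> ring
    rw [step, Finset.sum_add_distrib, ← Finset.mul_sum, ← Finset.sum_div,
      Finset.sum_sub_distrib, ← Finset.mul_sum, ← hS1, ← hS2, ← hT]
  rw [hexp]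
  have hrhs : (∑ ω ∈ s, p ω * g (W ω)) = g w * S1 := by
    rw [hS1, Finset.mul_sum]
    exact Finset.sum_congr rfl fun ω hω => by rw [hmem ω hω]; ring
  rw [hrhs, hgw, hlamw]
  field_simp
  ring
end
end

section
/- Double robustness in the propensity: if the outcome regression g_z(w) = E[δ(H) | Z=z, W=w] is correctly specified but the propensity model λ̄_z is arbitrary with values in (0,1), then E[ g_z(W) + 1{Z=z}·(δ(H) − g_z(W))/λ̄_z(W) ] = E[g_z(W)]. -/
open Finset
open scoped BigOperators Classical

noncomputable section

/-!
Write `r ω = δ ω - g (W ω)` for the residual of the outcome regression. Since `g w` is the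
conditional mean of `δ` on `{Z = z, W = w}`, the residual sums to zero (against `p`) on each such
cell. The augmentation term of the score is the residual on `{Z = z}` weighted by `1 / λ̄ (W ω)`,
a weight that is constant on every cell, so it still sums to zero whatever `λ̄` is.
-/

lemma pExp_add {Ω : Type*} [Fintype Ω] (p f h : Ω → ℝ) :
    pExp p (fun ω => f ω + h ω) = pExp p f + pExp p h := by
  simp only [pExp, mul_add, sum_add_distrib]

lemma sum_filter_mul_sub_pCE_eq_zero {Ω : Type*} [Fintype Ω] (p f : Ω → ℝ) (A : Set Ω)
    (hA : pPr p A ≠ 0) :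
    ∑ ω ∈ univ with ω ∈ A, p ω * (f ω - pCE p f A) = 0 := by
  have hmass : pCE p f A * pPr p A = ∑ ω ∈ univ with ω ∈ A, p ω * f ω := by
    rw [pCE, div_mul_cancel₀ _ hA, sum_filter]
  simp only [mul_sub, sum_sub_distrib, ← sum_mul]
  rw [← hmass, pPr, ← sum_filter, mul_comm]
  exact sub_self _

lemma sum_mul_comp_eq_zero_of_sum_fiber_eq_zero {ι κ R : Type*} [Fintype κ] [DecidableEq κ]
    [NonUnitalNonAssocSemiring R] {s : Finset ι} (W : ι → κ) (f : ι → R)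
    (hf : ∀ k, ∑ i ∈ s with W i = k, f i = 0) (c : κ → R) :
    ∑ i ∈ s, f i * c (W i) = 0 := by
  rw [← sum_fiberwise s W]
  refine sum_eq_zero fun k _ => ?_
  calc ∑ i ∈ s with W i = k, f i * c (W i)
      = ∑ i ∈ s with W i = k, f i * c k :=
        sum_congr rfl fun i hi => by rw [(mem_filter.mp hi).2]
    _ = 0 := by rw [← sum_mul, hf k, zero_mul]

theorem dr_score_misspecified_propensity_general
    {Ω 𝕎 : Type*} [Fintype Ω] [Fintype 𝕎]
    (p : Ω → ℝ)
    (Z : Ω → ℕ) (W : Ω → 𝕎)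
    (δ : Ω → ℝ) (z : ℕ)
    (hpos : ∀ w, 0 < pPr p {ω | Z ω = z ∧ W ω = w})
    (lambar : 𝕎 → ℝ)
    (g : 𝕎 → ℝ)
    (hg : ∀ w, g w = pCE p δ {ω | Z ω = z ∧ W ω = w}) :
    pExp p (fun ω =>
        g (W ω) + (if Z ω = z then (1:ℝ) else 0) * (δ ω - g (W ω)) / lambar (W ω))
    = pExp p (fun ω => g (W ω)) := by
  have hcell : ∀ w, ∑ ω ∈ univ.filter (Z · = z) with W ω = w, p ω * (δ ω - g (W ω)) = 0 := by
    intro w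
    refine (sum_congr ?_ fun ω hω => ?_).trans
      (sum_filter_mul_sub_pCE_eq_zero p δ _ (hpos w).ne')
    · ext; simp
    · obtain ⟨-, hW⟩ : Z ω = z ∧ W ω = w := by simpa using hω
      rw [hW, hg]
  have haug : pExp p (fun ω =>
      (if Z ω = z then (1:ℝ) else 0) * (δ ω - g (W ω)) / lambar (W ω)) = 0 :=
    calc _ = ∑ ω ∈ univ.filter (Z · = z), p ω * (δ ω - g (W ω)) * (lambar (W ω))⁻¹ := by
          rw [pExp, sum_filter]
          refine sum_congr rfl fun ω _ => ?_
          split_ifs <;> ring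
      _ = 0 := sum_mul_comp_eq_zero_of_sum_fiber_eq_zero W _ hcell fun w => (lambar w)⁻¹
  rw [pExp_add, haug, add_zero]

/-- Double robustness in the propensity: correct outcome regression, arbitrary propensity model. -/
theorem dr_score_misspecified_propensity
    {Ω 𝕎 : Type*} [Fintype Ω] [Fintype 𝕎]
    (p : Ω → ℝ) (hp : ∀ ω, 0 ≤ p ω) (hpsum : ∑ ω, p ω = 1)
    (Z : Ω → ℕ) (hZ : ∀ ω, Z ω = 0 ∨ Z ω = 1) (W : Ω → 𝕎)
    (δ : Ω → ℝ) (z : ℕ)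
    (hpos : ∀ w, 0 < pPr p {ω | Z ω = z ∧ W ω = w})
    (lambar : 𝕎 → ℝ)
    (hlambar : ∀ w, 0 < lambar w ∧ lambar w < 1)
    (g : 𝕎 → ℝ)
    (hg : ∀ w, g w = pCE p δ {ω | Z ω = z ∧ W ω = w}) :
    pExp p (fun ω =>
        g (W ω) + (if Z ω = z then (1:ℝ) else 0) * (δ ω - g (W ω)) / lambar (W ω))
    = pExp p (fun ω => g (W ω)) :=
  dr_score_misspecified_propensity_general p Z W δ z hpos lambar g hg
end
end

section
/- Under the moderator-unconfoundedness assumptions, the causal balanced group average treatment effect is identified: E[(Y^{1,1} − Y^{0,1}) − (Y^{1,0} − Y^{0,0})] = E[ μ₁(1,X) − μ₀(1,X) − μ₁(0,X) + μ₀(0,X) ], where μ_d(z,x) = E[Y | D=d, Z=z, X=x]. -/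
open Finset
open scoped BigOperators Classical

noncomputable section

/-- Conditional (unnormalized) sum. -/
def cSum {Ω : Type*} [Fintype Ω] (p : Ω → ℝ) (f : Ω → ℝ) (A : Set Ω) : ℝ :=
  ∑ ω, if ω ∈ A then p ω * f ω else 0

lemma pCE_eq {Ω : Type*} [Fintype Ω] (p f : Ω → ℝ) (A : Set Ω) :
    pCE p f A = cSum p f A / pPr p A := rfl

lemma cSum_congr {Ω : Type*} [Fintype Ω] (p : Ω → ℝ) {f g : Ω → ℝ} {A B : Set Ω}
    (hfg : ∀ ω, ω ∈ A → f ω = g ω) (hAB : ∀ ω, ω ∈ A ↔ ω ∈ B) :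
    cSum p f A = cSum p g B := by
  unfold cSum
  refine Finset.sum_congr rfl fun ω _ => ?_
  by_cases h : ω ∈ A
  · rw [if_pos h, if_pos ((hAB ω).1 h), hfg ω h]
  · rw [if_neg h, if_neg (fun hB => h ((hAB ω).2 hB))]

lemma pPr_congr {Ω : Type*} [Fintype Ω] (p : Ω → ℝ) {A B : Set Ω}
    (hAB : ∀ ω, ω ∈ A ↔ ω ∈ B) : pPr p A = pPr p B := by
  unfold pPr
  refine Finset.sum_congr rfl fun ω _ => ?_
  by_cases h : ω ∈ A
  · rw [if_pos h, if_pos ((hAB ω).1 h)]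
  · rw [if_neg h, if_neg (fun hB => h ((hAB ω).2 hB))]

lemma pCE_congr {Ω : Type*} [Fintype Ω] (p : Ω → ℝ) {f g : Ω → ℝ} {A B : Set Ω}
    (hfg : ∀ ω, ω ∈ A → f ω = g ω) (hAB : ∀ ω, ω ∈ A ↔ ω ∈ B) :
    pCE p f A = pCE p g B := by
  rw [pCE_eq, pCE_eq, cSum_congr p hfg hAB, pPr_congr p hAB]

lemma cSum_comp {Ω V : Type*} [Fintype Ω] (p : Ω → ℝ) (W : Ω → V) (f : V → ℝ) (A : Set Ω) :
    cSum p (fun ω => f (W ω)) A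
      = ∑ v ∈ Finset.univ.image W, f v * pPr p {ω | W ω = v ∧ ω ∈ A} := by
  unfold cSum pPr
  simp_rw [Finset.mul_sum]
  rw [Finset.sum_comm]
  refine Finset.sum_congr rfl fun ω _ => ?_
  by_cases h : ω ∈ A
  · simp only [Set.mem_setOf_eq, h, and_true, mul_ite, mul_zero, if_true, if_pos h]
    rw [Finset.sum_ite_eq, if_pos (Finset.mem_image_of_mem W (Finset.mem_univ ω))]
    ring
  · simp only [Set.mem_setOf_eq, h, and_false, mul_ite, mul_zero, if_neg h, if_false]
    simp

lemma cSum_indep {Ω V : Type*} [Fintype Ω] (p : Ω → ℝ) (W : Ω → V) (A B : Set Ω)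
    (h : ∀ S : Set V,
      pPr p {ω | W ω ∈ S ∧ ω ∈ A} * pPr p B = pPr p {ω | W ω ∈ S ∧ ω ∈ B} * pPr p A)
    (f : V → ℝ) :
    cSum p (fun ω => f (W ω)) A * pPr p B = cSum p (fun ω => f (W ω)) B * pPr p A := by
  rw [cSum_comp, cSum_comp, Finset.sum_mul, Finset.sum_mul]
  refine Finset.sum_congr rfl fun v _ => ?_
  have h1 := h {v}
  have e1 : pPr p {ω | W ω ∈ ({v} : Set V) ∧ ω ∈ A} = pPr p {ω | W ω = v ∧ ω ∈ A} :=
    pPr_congr p fun ω => by simp [Set.mem_setOf_eq]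
  have e2 : pPr p {ω | W ω ∈ ({v} : Set V) ∧ ω ∈ B} = pPr p {ω | W ω = v ∧ ω ∈ B} :=
    pPr_congr p fun ω => by simp [Set.mem_setOf_eq]
  rw [e1, e2] at h1
  rw [mul_assoc, mul_assoc, h1]

lemma pCE_eq_of_mul {Ω : Type*} [Fintype Ω] (p f : Ω → ℝ) {A B : Set Ω}
    (hA : 0 < pPr p A) (hB : 0 < pPr p B)
    (h : cSum p f A * pPr p B = cSum p f B * pPr p A) :
    pCE p f A = pCE p f B := by
  rw [pCE_eq, pCE_eq, div_eq_div_iff hA.ne' hB.ne']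
  exact h

lemma cSum_comb {Ω : Type*} [Fintype Ω] (p : Ω → ℝ) (f1 f2 f3 f4 : Ω → ℝ) (A : Set Ω) :
    cSum p (fun ω => (f1 ω - f2 ω) - (f3 ω - f4 ω)) A
      = cSum p f1 A - cSum p f2 A - cSum p f3 A + cSum p f4 A := by
  unfold cSum
  rw [← Finset.sum_sub_distrib, ← Finset.sum_sub_distrib, ← Finset.sum_add_distrib]
  refine Finset.sum_congr rfl fun ω _ => ?_
  split_ifs <;> ring

/-- Identification of the causal balanced group average treatment effect (ΔCBGATE). -/
theorem cbgate_identification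
    {Ω 𝕏 : Type*} [Fintype Ω] [Fintype 𝕏]
    (p : Ω → ℝ) (hp : ∀ ω, 0 ≤ p ω) (hpsum : ∑ ω, p ω = 1)
    (D Z : Ω → ℕ) (hD : ∀ ω, D ω = 0 ∨ D ω = 1) (hZ : ∀ ω, Z ω = 0 ∨ Z ω = 1)
    (X : Ω → 𝕏)
    (Ypo : ℕ → ℕ → Ω → ℝ) (Y : Ω → ℝ)
    (hSUTVA : ∀ ω, Y ω = Ypo (D ω) (Z ω) ω)
    (hposX : ∀ x, 0 < pPr p {ω | X ω = x})
    (hpos : ∀ x d' z', (d' = 0 ∨ d' = 1) → (z' = 0 ∨ z' = 1) →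
        0 < pPr p {ω | D ω = d' ∧ Z ω = z' ∧ X ω = x})
    (hCIAZ : ∀ (x : 𝕏) (S : Set (ℝ × ℝ × ℝ × ℝ)) (z' : ℕ),
        pPr p {ω | (Ypo 1 1 ω, Ypo 0 1 ω, Ypo 1 0 ω, Ypo 0 0 ω) ∈ S ∧ Z ω = z' ∧ X ω = x} *
            pPr p {ω | X ω = x}
        = pPr p {ω | (Ypo 1 1 ω, Ypo 0 1 ω, Ypo 1 0 ω, Ypo 0 0 ω) ∈ S ∧ X ω = x} *
            pPr p {ω | Z ω = z' ∧ X ω = x})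
    (hCIAD : ∀ (x : 𝕏) (z' : ℕ) (S : Set (ℝ × ℝ)) (d' : ℕ),
        pPr p {ω | (Ypo 1 z' ω, Ypo 0 z' ω) ∈ S ∧ D ω = d' ∧ X ω = x ∧ Z ω = z'} *
            pPr p {ω | X ω = x ∧ Z ω = z'}
        = pPr p {ω | (Ypo 1 z' ω, Ypo 0 z' ω) ∈ S ∧ X ω = x ∧ Z ω = z'} *
            pPr p {ω | D ω = d' ∧ X ω = x ∧ Z ω = z'})
    (hoverZ : ∀ x z', (z' = 0 ∨ z' = 1) →
        0 < pPr p {ω | Z ω = z' ∧ X ω = x} / pPr p {ω | X ω = x} ∧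
        pPr p {ω | Z ω = z' ∧ X ω = x} / pPr p {ω | X ω = x} < 1)
    (hoverD : ∀ x d' z', (d' = 0 ∨ d' = 1) → (z' = 0 ∨ z' = 1) →
        0 < pPr p {ω | D ω = d' ∧ Z ω = z' ∧ X ω = x} / pPr p {ω | Z ω = z' ∧ X ω = x} ∧
        pPr p {ω | D ω = d' ∧ Z ω = z' ∧ X ω = x} / pPr p {ω | Z ω = z' ∧ X ω = x} < 1) :
    pExp p (fun ω => (Ypo 1 1 ω - Ypo 0 1 ω) - (Ypo 1 0 ω - Ypo 0 0 ω))
    = pExp p (fun ω =>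
        pCE p Y {ω' | D ω' = 1 ∧ Z ω' = 1 ∧ X ω' = X ω}
          - pCE p Y {ω' | D ω' = 0 ∧ Z ω' = 1 ∧ X ω' = X ω}
          - pCE p Y {ω' | D ω' = 1 ∧ Z ω' = 0 ∧ X ω' = X ω}
          + pCE p Y {ω' | D ω' = 0 ∧ Z ω' = 0 ∧ X ω' = X ω}) := by
  -- positivity of Z∧X events
  have hposZX : ∀ x z', (z' = 0 ∨ z' = 1) → 0 < pPr p {ω | Z ω = z' ∧ X ω = x} := by
    intro x z' hz
    have h1 := (hoverZ x z' hz).1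
    have h2 := hposX x
    rcases div_pos_iff.mp h1 with ⟨ha, _⟩ | ⟨_, hb⟩
    · exact ha
    · linarith
  -- key identification for each cell
  have key : ∀ d' z' x, (d' = 0 ∨ d' = 1) → (z' = 0 ∨ z' = 1) →
      pCE p Y {ω' | D ω' = d' ∧ Z ω' = z' ∧ X ω' = x} * pPr p {ω | X ω = x}
        = cSum p (Ypo d' z') {ω | X ω = x} := by
    intro d' z' x hd hz
    have hA3 : 0 < pPr p {ω | D ω = d' ∧ Z ω = z' ∧ X ω = x} := hpos x d' z' hd hz
    have hBzx : 0 < pPr p {ω | Z ω = z' ∧ X ω = x} := hposZX x z' hz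
    have hBx : 0 < pPr p {ω | X ω = x} := hposX x
    have hA'pos : 0 < pPr p {ω | D ω = d' ∧ X ω = x ∧ Z ω = z'} := by
      have e := pPr_congr (A := {ω | D ω = d' ∧ Z ω = z' ∧ X ω = x})
        (B := {ω | D ω = d' ∧ X ω = x ∧ Z ω = z'}) p
        (fun ω => by simp only [Set.mem_setOf_eq]; tauto)
      linarith
    have hB'pos : 0 < pPr p {ω | X ω = x ∧ Z ω = z'} := by
      have e := pPr_congr (A := {ω | Z ω = z' ∧ X ω = x})
        (B := {ω | X ω = x ∧ Z ω = z'}) p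
        (fun ω => by simp only [Set.mem_setOf_eq]; tauto)
      linarith
    -- step a: replace Y by the potential outcome on the cell
    have ha : pCE p Y {ω' | D ω' = d' ∧ Z ω' = z' ∧ X ω' = x}
        = pCE p (Ypo d' z') {ω | D ω = d' ∧ Z ω = z' ∧ X ω = x} :=
      pCE_congr p (fun ω hω => by rw [hSUTVA ω, hω.1, hω.2.1]) (fun ω => Iff.rfl)
    -- step b: unconfoundedness of D given (X,Z)
    have hfW2 : ∀ ω, Ypo d' z' ω
        = (fun v : ℝ × ℝ => if d' = 1 then v.1 else v.2) (Ypo 1 z' ω, Ypo 0 z' ω) := by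
      intro ω
      rcases hd with h | h <;> subst h <;> norm_num
    have hb : pCE p (Ypo d' z') {ω | D ω = d' ∧ X ω = x ∧ Z ω = z'}
        = pCE p (Ypo d' z') {ω | X ω = x ∧ Z ω = z'} := by
      have hind := cSum_indep p (fun ω => (Ypo 1 z' ω, Ypo 0 z' ω))
        {ω | D ω = d' ∧ X ω = x ∧ Z ω = z'} {ω | X ω = x ∧ Z ω = z'}
        (fun S => hCIAD x z' S d')
        (fun v => if d' = 1 then v.1 else v.2)
      have h1 := pCE_eq_of_mul p _ hA'pos hB'pos hind
      calc pCE p (Ypo d' z') {ω | D ω = d' ∧ X ω = x ∧ Z ω = z'}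
          = pCE p (fun ω => (fun v : ℝ × ℝ => if d' = 1 then v.1 else v.2)
              ((fun ω => (Ypo 1 z' ω, Ypo 0 z' ω)) ω)) {ω | D ω = d' ∧ X ω = x ∧ Z ω = z'} :=
            pCE_congr p (fun ω _ => hfW2 ω) (fun _ => Iff.rfl)
        _ = pCE p (fun ω => (fun v : ℝ × ℝ => if d' = 1 then v.1 else v.2)
              ((fun ω => (Ypo 1 z' ω, Ypo 0 z' ω)) ω)) {ω | X ω = x ∧ Z ω = z'} := h1
        _ = pCE p (Ypo d' z') {ω | X ω = x ∧ Z ω = z'} :=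
            pCE_congr p (fun ω _ => (hfW2 ω).symm) (fun _ => Iff.rfl)
    -- step c: unconfoundedness of Z given X
    have hfW4 : ∀ ω, Ypo d' z' ω
        = (fun v : ℝ × ℝ × ℝ × ℝ =>
            if d' = 1 ∧ z' = 1 then v.1 else if d' = 0 ∧ z' = 1 then v.2.1
            else if d' = 1 ∧ z' = 0 then v.2.2.1 else v.2.2.2)
          (Ypo 1 1 ω, Ypo 0 1 ω, Ypo 1 0 ω, Ypo 0 0 ω) := by
      intro ω
      rcases hd with h | h <;> rcases hz with h2 | h2 <;> subst h <;> subst h2 <;> norm_num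
    have hc : pCE p (Ypo d' z') {ω | Z ω = z' ∧ X ω = x}
        = pCE p (Ypo d' z') {ω | X ω = x} := by
      have hind := cSum_indep p (fun ω => (Ypo 1 1 ω, Ypo 0 1 ω, Ypo 1 0 ω, Ypo 0 0 ω))
        {ω | Z ω = z' ∧ X ω = x} {ω | X ω = x}
        (fun S => hCIAZ x S z')
        (fun v => if d' = 1 ∧ z' = 1 then v.1 else if d' = 0 ∧ z' = 1 then v.2.1
            else if d' = 1 ∧ z' = 0 then v.2.2.1 else v.2.2.2)
      have h1 := pCE_eq_of_mul p _ hBzx hBx hind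
      calc pCE p (Ypo d' z') {ω | Z ω = z' ∧ X ω = x}
          = pCE p (fun ω => (fun v : ℝ × ℝ × ℝ × ℝ =>
              if d' = 1 ∧ z' = 1 then v.1 else if d' = 0 ∧ z' = 1 then v.2.1
              else if d' = 1 ∧ z' = 0 then v.2.2.1 else v.2.2.2)
              ((fun ω => (Ypo 1 1 ω, Ypo 0 1 ω, Ypo 1 0 ω, Ypo 0 0 ω)) ω))
              {ω | Z ω = z' ∧ X ω = x} :=
            pCE_congr p (fun ω _ => hfW4 ω) (fun _ => Iff.rfl)
        _ = pCE p (fun ω => (fun v : ℝ × ℝ × ℝ × ℝ =>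
              if d' = 1 ∧ z' = 1 then v.1 else if d' = 0 ∧ z' = 1 then v.2.1
              else if d' = 1 ∧ z' = 0 then v.2.2.1 else v.2.2.2)
              ((fun ω => (Ypo 1 1 ω, Ypo 0 1 ω, Ypo 1 0 ω, Ypo 0 0 ω)) ω))
              {ω | X ω = x} := h1
        _ = pCE p (Ypo d' z') {ω | X ω = x} :=
            pCE_congr p (fun ω _ => (hfW4 ω).symm) (fun _ => Iff.rfl)
    have hb' : pCE p (Ypo d' z') {ω | D ω = d' ∧ Z ω = z' ∧ X ω = x}
        = pCE p (Ypo d' z') {ω | Z ω = z' ∧ X ω = x} := by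
      calc pCE p (Ypo d' z') {ω | D ω = d' ∧ Z ω = z' ∧ X ω = x}
          = pCE p (Ypo d' z') {ω | D ω = d' ∧ X ω = x ∧ Z ω = z'} :=
            pCE_congr p (fun _ _ => rfl) (fun ω => by simp only [Set.mem_setOf_eq]; tauto)
        _ = pCE p (Ypo d' z') {ω | X ω = x ∧ Z ω = z'} := hb
        _ = pCE p (Ypo d' z') {ω | Z ω = z' ∧ X ω = x} :=
            pCE_congr p (fun _ _ => rfl) (fun ω => by simp only [Set.mem_setOf_eq]; tauto)
    rw [ha, hb', hc, pCE_eq, div_mul_cancel₀ _ hBx.ne']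
  -- decompose expectations over values of X
  have hL : ∀ g : Ω → ℝ, pExp p g = ∑ x : 𝕏, cSum p g {ω | X ω = x} := by
    intro g
    unfold pExp cSum
    rw [Finset.sum_comm]
    refine Finset.sum_congr rfl fun ω _ => ?_
    simp only [Set.mem_setOf_eq]
    rw [Finset.sum_ite_eq, if_pos (Finset.mem_univ (X ω))]
  have hR : ∀ F : 𝕏 → ℝ, pExp p (fun ω => F (X ω)) = ∑ x : 𝕏, F x * pPr p {ω | X ω = x} := by
    intro F
    have e : ∀ x : 𝕏, F x * pPr p {ω | X ω = x} = ∑ ω, if X ω = x then p ω * F x else 0 := by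
      intro x
      unfold pPr
      rw [Finset.mul_sum]
      refine Finset.sum_congr rfl fun ω _ => ?_
      simp only [Set.mem_setOf_eq]
      split_ifs <;> ring
    rw [Finset.sum_congr rfl fun x _ => e x, Finset.sum_comm]
    unfold pExp
    refine Finset.sum_congr rfl fun ω _ => ?_
    have e2 : ∀ x : 𝕏, (if X ω = x then p ω * F x else 0) = if X ω = x then p ω * F (X ω) else 0 := by
      intro x; by_cases h : X ω = x
      · rw [if_pos h, if_pos h, h]
      · rw [if_neg h, if_neg h]
    rw [Finset.sum_congr rfl fun x _ => e2 x, Finset.sum_ite_eq, if_pos (Finset.mem_univ (X ω))]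
  have hRspec := hR (fun x =>
      pCE p Y {ω' | D ω' = 1 ∧ Z ω' = 1 ∧ X ω' = x}
      - pCE p Y {ω' | D ω' = 0 ∧ Z ω' = 1 ∧ X ω' = x}
      - pCE p Y {ω' | D ω' = 1 ∧ Z ω' = 0 ∧ X ω' = x}
      + pCE p Y {ω' | D ω' = 0 ∧ Z ω' = 0 ∧ X ω' = x})
  rw [hL, hRspec]
  refine Finset.sum_congr rfl fun x _ => ?_
  rw [cSum_comb p (Ypo 1 1) (Ypo 0 1) (Ypo 1 0) (Ypo 0 0)]
  rw [← key 1 1 x (Or.inr rfl) (Or.inr rfl), ← key 0 1 x (Or.inl rfl) (Or.inr rfl),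
    ← key 1 0 x (Or.inr rfl) (Or.inl rfl), ← key 0 0 x (Or.inl rfl) (Or.inl rfl)]
  ring
end
end
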